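/- arXiv:1511.08842 — 5 statements merged into one kernel-verified Lean document; each statement's English description precedes it below -/
import Mathlib

section
/- Let n, N be positive integers, let E ∈ ℝ^{n×N}, let d ∈ ℝ^n with ‖d‖₂ = 1, and let λ, L be reals with 0 < λ < L. Define ĉ ∈ ℝ^N entrywise by ĉ_i = min(|(H_λ(Eᵀd))_i|, L) · sign((H_λ(Eᵀd))_i). Then ĉ is a global minimizer of the function c ↦ ‖E − d cᵀ‖_F² + λ² ‖c‖₀ over the set {c ∈ ℝ^N : ‖c‖_∞ ≤ L}. -/
/-!
Since `‖d‖₂ = 1`, expanding the square gives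
`‖E - d cᵀ‖_F² + λ²‖c‖₀ = ‖E‖_F² + ∑ⱼ (cⱼ² - 2 bⱼ cⱼ + λ² [cⱼ ≠ 0])` with `b = Eᵀd`,
so the problem separates into one scalar problem per coordinate. On `[-L, L]` the scalar
objective `t² - 2bt` is minimised by the clipped value `sign b · min(|b|, L)`, and paying `λ²`
for a nonzero value beats `t = 0` exactly when `|b| ≥ λ`; this is what hard thresholding decides.
-/

open Finset Matrix

/-- Squared Frobenius norm of a matrix. -/
noncomputable def frobSq {n N : ℕ} (M : Matrix (Fin n) (Fin N) ℝ) : ℝ :=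
  ∑ i, ∑ j, (M i j) ^ 2

/-- ℓ0 "norm": number of nonzero entries of a vector. -/
noncomputable def l0 {N : ℕ} (c : Fin N → ℝ) : ℕ :=
  (Finset.univ.filter (fun i => c i ≠ 0)).card

/-- Rank-one outer product d cᵀ. -/
noncomputable def outer {n N : ℕ} (d : Fin n → ℝ) (c : Fin N → ℝ) :
    Matrix (Fin n) (Fin N) ℝ :=
  Matrix.of fun i j => d i * c j

/-- Hard-thresholding operator. -/
noncomputable def hardThresh {N : ℕ} (lam : ℝ) (b : Fin N → ℝ) : Fin N → ℝ :=
  fun i => if lam ≤ |b i| then b i else 0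

noncomputable def clipAbs (L x : ℝ) : ℝ :=
  min |x| L * Real.sign x

lemma abs_clipAbs {L : ℝ} (hL : 0 ≤ L) (x : ℝ) : |clipAbs L x| = min |x| L := by
  unfold clipAbs
  rcases lt_trichotomy x 0 with hx | rfl | hx
  · rw [Real.sign_of_neg hx, mul_neg_one, abs_neg, abs_of_nonneg (le_min (abs_nonneg x) hL)]
  · simp [hL]
  · rw [Real.sign_of_pos hx, mul_one, abs_of_nonneg (le_min (abs_nonneg x) hL)]

lemma mul_clipAbs (L x : ℝ) : x * clipAbs L x = |x| * min |x| L := by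
  unfold clipAbs
  rcases lt_trichotomy x 0 with hx | rfl | hx
  · rw [Real.sign_of_neg hx, abs_of_neg hx]; ring
  · simp
  · rw [Real.sign_of_pos hx, abs_of_pos hx]; ring

noncomputable def coordLoss (lam b t : ℝ) : ℝ :=
  t ^ 2 - 2 * b * t + lam ^ 2 * if t = 0 then 0 else 1

lemma frobSq_sub_outer {n N : ℕ} (E : Matrix (Fin n) (Fin N) ℝ) (d : Fin n → ℝ)
    (c : Fin N → ℝ) :
    frobSq (E - outer d c) =
      frobSq E - 2 * ∑ j, (Eᵀ *ᵥ d) j * c j + (∑ i, d i ^ 2) * ∑ j, c j ^ 2 := by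
  have cross : ∑ i, ∑ j, E i j * (d i * c j) = ∑ j, (Eᵀ *ᵥ d) j * c j := by
    simp only [mulVec, dotProduct, transpose_apply, Finset.sum_mul]
    rw [Finset.sum_comm]
    exact Finset.sum_congr rfl fun j _ => Finset.sum_congr rfl fun i _ => by ring
  have expand : ∀ i j, (E i j - d i * c j) ^ 2 =
      E i j ^ 2 - 2 * (E i j * (d i * c j)) + d i ^ 2 * c j ^ 2 := fun _ _ => by ring
  simp only [frobSq, outer, Matrix.sub_apply, of_apply, expand, Finset.sum_add_distrib,
    Finset.sum_sub_distrib, ← Finset.mul_sum, cross, Finset.sum_mul_sum]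

lemma l0_eq_sum {N : ℕ} (c : Fin N → ℝ) : (l0 c : ℝ) = ∑ j, if c j = 0 then 0 else 1 := by
  rw [l0, Finset.card_filter]
  push_cast
  exact Finset.sum_congr rfl fun j _ => by split_ifs <;> simp_all

lemma frobSq_sub_outer_add_l0 {n N : ℕ} (E : Matrix (Fin n) (Fin N) ℝ) {d : Fin n → ℝ}
    (hd : ∑ i, d i ^ 2 = 1) (lam : ℝ) (c : Fin N → ℝ) :
    frobSq (E - outer d c) + lam ^ 2 * (l0 c : ℝ) =
      frobSq E + ∑ j, coordLoss lam ((Eᵀ *ᵥ d) j) (c j) := by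
  rw [frobSq_sub_outer, hd, l0_eq_sum]
  simp only [coordLoss, Finset.sum_add_distrib, Finset.sum_sub_distrib, Finset.mul_sum]
  ring_nf

lemma min_sq_sub_le {B L u : ℝ} (hu : u ≤ L) :
    min B L ^ 2 - 2 * B * min B L ≤ u ^ 2 - 2 * B * u := by
  rcases le_total B L with h | h
  · rw [min_eq_left h]; nlinarith [sq_nonneg (u - B)]
  · rw [min_eq_right h]
    nlinarith [mul_nonneg (sub_nonneg.2 hu) (by linarith : 0 ≤ 2 * B - L - u)]

lemma min_sq_sub_add_sq_nonpos {B L lam : ℝ} (hlam : 0 ≤ lam) (hB : lam ≤ B) (hL : lam ≤ L) :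
    min B L ^ 2 - 2 * B * min B L + lam ^ 2 ≤ 0 := by
  rcases le_total B L with h | h
  · rw [min_eq_left h]; nlinarith
  · rw [min_eq_right h]; nlinarith

lemma coordLoss_clipAbs_le {lam L b t : ℝ} (hlam : 0 < lam) (hL : lam < L) (hb : lam ≤ |b|)
    (ht : |t| ≤ L) : coordLoss lam b (clipAbs L b) ≤ coordLoss lam b t := by
  have habs := abs_clipAbs (hlam.trans hL).le b
  have hclip : clipAbs L b ≠ 0 := by
    rw [← abs_pos, habs]; exact lt_min (hlam.trans_le hb) (hlam.trans hL)
  have hsq : clipAbs L b ^ 2 = min |b| L ^ 2 := by rw [← sq_abs, habs]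
  have hbt : b * t ≤ |b| * |t| := (le_abs_self _).trans (abs_mul b t).le
  have hmin := min_sq_sub_le (B := |b|) ht
  unfold coordLoss
  rw [if_neg hclip, hsq, mul_assoc, mul_clipAbs]
  split_ifs with ht0
  · subst ht0
    linarith [min_sq_sub_add_sq_nonpos hlam.le hb hL.le]
  · nlinarith [sq_abs t]

lemma coordLoss_zero_le {lam b t : ℝ} (hb : |b| < lam) :
    coordLoss lam b 0 ≤ coordLoss lam b t := by
  have hb2 : b ^ 2 < lam ^ 2 := by nlinarith [sq_abs b, abs_nonneg b]
  unfold coordLoss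
  rw [if_pos rfl]
  split_ifs with ht0
  · simp [ht0]
  · nlinarith [sq_nonneg (t - b)]

lemma coordLoss_clipAbs_hardThresh_le {N : ℕ} {lam L : ℝ} (hlam : 0 < lam) (hL : lam < L)
    (b : Fin N → ℝ) (j : Fin N) {t : ℝ} (ht : |t| ≤ L) :
    coordLoss lam (b j) (clipAbs L (hardThresh lam b j)) ≤ coordLoss lam (b j) t := by
  unfold hardThresh
  split_ifs with hb
  · exact coordLoss_clipAbs_le hlam hL hb ht
  · simpa [clipAbs] using coordLoss_zero_le (not_le.1 hb)

theorem stmt0_general {n N : ℕ}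
    (E : Matrix (Fin n) (Fin N) ℝ) (d : Fin n → ℝ)
    (hd : Real.sqrt (∑ i, (d i) ^ 2) = 1)
    (lam L : ℝ) (hlam : 0 < lam) (hL : lam < L)
    (chat : Fin N → ℝ)
    (hchat : chat = fun i =>
      min |hardThresh lam (Eᵀ.mulVec d) i| L * Real.sign (hardThresh lam (Eᵀ.mulVec d) i)) :
    (∀ i, |chat i| ≤ L) ∧
    ∀ c : Fin N → ℝ, (∀ i, |c i| ≤ L) →
      frobSq (E - outer d chat) + lam ^ 2 * (l0 chat : ℝ) ≤
      frobSq (E - outer d c) + lam ^ 2 * (l0 c : ℝ) := by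
  have hd1 : ∑ i, d i ^ 2 = 1 := Real.sqrt_eq_one.1 hd
  have hchat' : chat = fun i => clipAbs L (hardThresh lam (Eᵀ *ᵥ d) i) := hchat
  subst hchat'
  refine ⟨fun i => ?_, fun c hc => ?_⟩
  · rw [abs_clipAbs (hlam.trans hL).le]
    exact min_le_right _ _
  · rw [frobSq_sub_outer_add_l0 E hd1, frobSq_sub_outer_add_l0 E hd1]
    gcongr with j
    exact coordLoss_clipAbs_hardThresh_le hlam hL _ j (hc j)

theorem stmt0 {n N : ℕ} (hn : 0 < n) (hN : 0 < N)
    (E : Matrix (Fin n) (Fin N) ℝ) (d : Fin n → ℝ)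
    (hd : Real.sqrt (∑ i, (d i) ^ 2) = 1)
    (lam L : ℝ) (hlam : 0 < lam) (hL : lam < L)
    (chat : Fin N → ℝ)
    (hchat : chat = fun i =>
      min |hardThresh lam (Eᵀ.mulVec d) i| L * Real.sign (hardThresh lam (Eᵀ.mulVec d) i)) :
    (∀ i, |chat i| ≤ L) ∧
    ∀ c : Fin N → ℝ, (∀ i, |c i| ≤ L) →
      frobSq (E - outer d chat) + lam ^ 2 * (l0 chat : ℝ) ≤
      frobSq (E - outer d c) + lam ^ 2 * (l0 c : ℝ) :=
  stmt0_general E d hd lam L hlam hL chat hchat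
end

section
/- Let λ, L be reals with 0 < λ < L, let b ∈ ℝ with |b| > L, and consider the function φ(c) = (c − b)² + λ² θ(c) on the set {c ∈ ℝ : |c| ≤ L}, where θ(0) = 0 and θ(c) = 1 for c ≠ 0. Then c = L · sign(b) is the unique global minimizer of φ on this set; in particular, b² > (L · sign(b) − b)² + λ². -/
/-!
Every `c ≠ 0` pays the same penalty `λ²`, and among those the endpoint `L · sign b` is strictly
closest to `b`. The only competitor is `c = 0`, which saves `λ²` but loses
`b² - (|b| - L)² = L (2|b| - L) > L² > λ²` in fit.
-/

/-- Indicator of nonzero values. -/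
noncomputable def theta (a : ℝ) : ℝ := if a = 0 then 0 else 1

lemma theta_of_ne_zero {a : ℝ} (ha : a ≠ 0) : theta a = 1 := if_neg ha

lemma abs_mul_sign_le {L : ℝ} (hL : 0 ≤ L) (b : ℝ) : |L * Real.sign b| ≤ L := by
  rcases Real.sign_apply_eq b with h | h | h <;> simp [h, abs_of_nonneg hL, hL]

lemma sq_mul_sign_sub_lt_sq_sub {L b c : ℝ} (hb : L ≤ |b|) (hc : |c| ≤ L)
    (hne : c ≠ L * Real.sign b) : (L * Real.sign b - b) ^ 2 < (c - b) ^ 2 := by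
  obtain ⟨hcl, hcu⟩ := abs_le.mp hc
  rcases lt_trichotomy b 0 with hb0 | rfl | hb0
  · rw [Real.sign_of_neg hb0, mul_neg_one] at hne ⊢
    rw [abs_of_neg hb0] at hb
    have : -L < c := lt_of_le_of_ne hcl (Ne.symm hne)
    nlinarith
  · rw [abs_zero] at hb
    exact absurd (by linarith : c = 0) (by simpa using hne)
  · rw [Real.sign_of_pos hb0, mul_one] at hne ⊢
    rw [abs_of_pos hb0] at hb
    have : c < L := lt_of_le_of_ne hcu hne
    nlinarith

lemma sq_mul_sign_sub_add_sq_lt_sq {lam L b : ℝ} (hlam : |lam| < L) (hb : L < |b|) :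
    (L * Real.sign b - b) ^ 2 + lam ^ 2 < b ^ 2 := by
  have hL : 0 < L := (abs_nonneg lam).trans_lt hlam
  have hlamL : lam ^ 2 < L ^ 2 := sq_lt_sq' (abs_lt.mp hlam).1 (abs_lt.mp hlam).2
  rcases lt_or_gt_of_ne (abs_pos.mp (hL.trans hb)) with hb0 | hb0
  · rw [Real.sign_of_neg hb0, abs_of_neg hb0] at *
    nlinarith
  · rw [Real.sign_of_pos hb0, abs_of_pos hb0] at *
    nlinarith

lemma sq_sub_add_theta_lt {lam L b c : ℝ} (hlam : |lam| < L) (hb : L < |b|) (hc : |c| ≤ L)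
    (hne : c ≠ L * Real.sign b) :
    (L * Real.sign b - b) ^ 2 + lam ^ 2 * theta (L * Real.sign b)
      < (c - b) ^ 2 + lam ^ 2 * theta c := by
  have hL : 0 < L := (abs_nonneg lam).trans_lt hlam
  have hb0 : b ≠ 0 := abs_pos.mp (hL.trans hb)
  rw [theta_of_ne_zero (mul_ne_zero hL.ne' (Real.sign_eq_zero_iff.not.mpr hb0)), mul_one]
  by_cases hc0 : c = 0
  · simpa [hc0, theta] using sq_mul_sign_sub_add_sq_lt_sq hlam hb
  · rw [theta_of_ne_zero hc0, mul_one]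
    exact add_lt_add_left (sq_mul_sign_sub_lt_sq_sub hb.le hc hne) _

theorem stmt5 (lam L : ℝ) (hlam : 0 < lam) (hL : lam < L)
    (b : ℝ) (hb : L < |b|)
    (phi : ℝ → ℝ) (hphi : phi = fun c => (c - b) ^ 2 + lam ^ 2 * theta c) :
    (|L * Real.sign b| ≤ L ∧
      (∀ c : ℝ, |c| ≤ L → phi (L * Real.sign b) ≤ phi c) ∧
      ∀ c : ℝ, |c| ≤ L → (∀ c' : ℝ, |c'| ≤ L → phi c ≤ phi c') → c = L * Real.sign b) ∧
    b ^ 2 > (L * Real.sign b - b) ^ 2 + lam ^ 2 := by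
  subst hphi
  have hlamL : |lam| < L := by rwa [abs_of_pos hlam]
  have hm : |L * Real.sign b| ≤ L := abs_mul_sign_le (hlam.trans hL).le b
  refine ⟨⟨hm, fun c hc => ?_, fun c hc hmin => ?_⟩, sq_mul_sign_sub_add_sq_lt_sq hlamL hb⟩
  · rcases eq_or_ne c (L * Real.sign b) with rfl | hne
    · exact le_rfl
    · exact (sq_sub_add_theta_lt hlamL hb hc hne).le
  · by_contra hne
    exact (hmin _ hm).not_gt (sq_sub_add_theta_lt hlamL hb hc hne)
end

section
/- Let λ > 0, let (c^t)_{t∈ℕ} be a sequence in ℝ^N converging to c* ∈ ℝ^N, and suppose that for every t and every index i, either c^t_i = 0 or |c^t_i| ≥ λ. Then there exists T such that for all t ≥ T, the support of c^t equals the support of c* (i.e., c^t_i = 0 exactly when c*_i = 0); in particular ‖c^t‖₀ = ‖c*‖₀ for all t ≥ T, and hence lim_{t→∞} ‖c^t‖₀ = ‖c*‖₀. -/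
/-! A coordinate converging to a nonzero limit is eventually nonzero, and one converging to zero
eventually has absolute value below `lam`, which the gap forces to mean it is exactly zero. So the
support stabilises at that of the limit, and `l0` is eventually constant. -/

open Filter Topology

theorem eventually_eq_zero_iff_of_tendsto_of_gap {α E : Type*} [NormedAddCommGroup E]
    {l : Filter α} {u : α → E} {x : E} {lam : ℝ} (hlam : 0 < lam) (hu : Tendsto u l (𝓝 x))
    (hgap : ∀ a, u a = 0 ∨ lam ≤ ‖u a‖) :
    ∀ᶠ a in l, (u a = 0 ↔ x = 0) := by
  by_cases hx : x = 0
  · subst hx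
    have hsmall : ∀ᶠ a in l, ‖u a‖ < lam :=
      (tendsto_zero_iff_norm_tendsto_zero.mp hu).eventually_lt_const hlam
    filter_upwards [hsmall] with a ha
    exact iff_of_true ((hgap a).resolve_right ha.not_ge) rfl
  · filter_upwards [hu.eventually_ne hx] with a ha
    exact iff_of_false ha hx

theorem l0_eq_of_forall_eq_zero_iff {N : ℕ} {c d : Fin N → ℝ} (h : ∀ i, c i = 0 ↔ d i = 0) :
    l0 c = l0 d := by
  unfold l0
  congr 1
  exact Finset.filter_congr fun i _ => not_congr (h i)

theorem stmt10 {N : ℕ} (lam : ℝ) (hlam : 0 < lam)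
    (c : ℕ → Fin N → ℝ) (cstar : Fin N → ℝ)
    (hconv : Tendsto c atTop (nhds cstar))
    (hgap : ∀ t i, c t i = 0 ∨ lam ≤ |c t i|) :
    (∃ T : ℕ, ∀ t ≥ T, (∀ i, c t i = 0 ↔ cstar i = 0) ∧ l0 (c t) = l0 cstar) ∧
    Tendsto (fun t => l0 (c t)) atTop (nhds (l0 cstar)) := by
  have hsupp : ∀ᶠ t in atTop, ∀ i, c t i = 0 ↔ cstar i = 0 :=
    eventually_all.mpr fun i =>
      eventually_eq_zero_iff_of_tendsto_of_gap hlam (tendsto_pi_nhds.mp hconv i) (hgap · i)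
  have hl0 : ∀ᶠ t in atTop, (∀ i, c t i = 0 ↔ cstar i = 0) ∧ l0 (c t) = l0 cstar :=
    hsupp.mono fun t ht => ⟨ht, l0_eq_of_forall_eq_zero_iff ht⟩
  refine ⟨eventually_atTop.mp hl0, tendsto_const_nhds.congr' ?_⟩
  exact hl0.mono fun t ht => ht.2.symm
end

section
/- Let n, N, J be positive integers, let Y ∈ ℝ^{n×N}, let λ > 0, and define f(C, D) = ‖Y − D Cᵀ‖_F² + λ² ‖C‖₀ for C ∈ ℝ^{N×J} and D ∈ ℝ^{n×J}. Let (C^t, D^t)_{t∈ℕ} be a sequence converging to (C*, D*) such that for every t, every nonzero entry of C^t has absolute value at least λ. Then lim_{t→∞} f(C^t, D^t) = f(C*, D*). -/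
/-!
The misfit term `‖Y - D Cᵀ‖_F²` is continuous in `(C, D)`. The sparsity term `‖C‖₀` is not, but the
gap condition keeps nonzero entries at distance at least `λ` from `0`: an entry of `C*` that is zero
forces the converging entries to vanish eventually, and a nonzero one forces them to stay nonzero.
So the support of `Cᵗ` eventually equals that of `C*`, and `‖Cᵗ‖₀` is eventually constant.
-/

open Filter Matrix

/-- Number of nonzero entries of a matrix. -/
noncomputable def l0mat {N J : ℕ} (C : Matrix (Fin N) (Fin J) ℝ) : ℕ :=
  (Finset.univ.filter (fun p : Fin N × Fin J => C p.1 p.2 ≠ 0)).card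

open Topology

theorem continuous_frobSq {n N : ℕ} : Continuous (frobSq : Matrix (Fin n) (Fin N) ℝ → ℝ) := by
  unfold frobSq
  fun_prop

theorem tendsto_frobSq_sub_mul_transpose {α : Type*} {l : Filter α} {n N J : ℕ}
    (Y : Matrix (Fin n) (Fin N) ℝ) {C : α → Matrix (Fin N) (Fin J) ℝ}
    {D : α → Matrix (Fin n) (Fin J) ℝ} {C₀ : Matrix (Fin N) (Fin J) ℝ} {D₀ : Matrix (Fin n) (Fin J) ℝ}
    (h : Tendsto (fun t => (C t, D t)) l (𝓝 (C₀, D₀))) :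
    Tendsto (fun t => frobSq (Y - D t * (C t)ᵀ)) l (𝓝 (frobSq (Y - D₀ * C₀ᵀ))) := by
  have hcont : Continuous fun p : Matrix (Fin N) (Fin J) ℝ × Matrix (Fin n) (Fin J) ℝ =>
      frobSq (Y - p.2 * p.1ᵀ) :=
    continuous_frobSq.comp <| continuous_const.sub <|
      continuous_snd.matrix_mul continuous_fst.matrix_transpose
  exact ((hcont.tendsto (C₀, D₀)).comp h :)

theorem l0mat_congr {N J : ℕ} {A B : Matrix (Fin N) (Fin J) ℝ} (h : ∀ i j, A i j = 0 ↔ B i j = 0) :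
    l0mat A = l0mat B := by
  unfold l0mat
  congr 1
  exact Finset.filter_congr fun p _ => not_congr (h p.1 p.2)

theorem Filter.Tendsto.eventually_eq_zero_iff_of_gap {α E : Type*} [NormedAddCommGroup E]
    {l : Filter α} {x : α → E} {a : E} {lam : ℝ} (hlam : 0 < lam) (hx : Tendsto x l (𝓝 a))
    (hgap : ∀ t, x t = 0 ∨ lam ≤ ‖x t‖) : ∀ᶠ t in l, (x t = 0 ↔ a = 0) := by
  by_cases ha : a = 0
  · subst ha
    filter_upwards [(tendsto_norm_zero.comp hx).eventually (eventually_lt_nhds hlam)] with t hsmall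
    exact iff_of_true ((hgap t).resolve_right (not_le.mpr hsmall)) rfl
  · filter_upwards [hx.eventually_ne ha] with t hne
    exact iff_of_false hne ha

theorem Filter.Tendsto.eventually_l0mat_eq_of_gap {α : Type*} {N J : ℕ} {l : Filter α}
    {C : α → Matrix (Fin N) (Fin J) ℝ} {C₀ : Matrix (Fin N) (Fin J) ℝ} {lam : ℝ}
    (hlam : 0 < lam) (hC : Tendsto C l (𝓝 C₀)) (hgap : ∀ t i j, C t i j = 0 ∨ lam ≤ |C t i j|) :
    ∀ᶠ t in l, l0mat (C t) = l0mat C₀ := by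
  have hentry : ∀ i j, ∀ᶠ t in l, (C t i j = 0 ↔ C₀ i j = 0) := fun i j =>
    (tendsto_pi_nhds.1 (tendsto_pi_nhds.1 hC i) j).eventually_eq_zero_iff_of_gap hlam
      fun t => hgap t i j
  filter_upwards [eventually_all.2 fun i => eventually_all.2 (hentry i)] with t ht
  exact l0mat_congr ht

theorem stmt11_general {n N J : ℕ}
    (Y : Matrix (Fin n) (Fin N) ℝ) (lam : ℝ) (hlam : 0 < lam)
    (f : Matrix (Fin N) (Fin J) ℝ → Matrix (Fin n) (Fin J) ℝ → ℝ)
    (hf : f = fun C D => frobSq (Y - D * Cᵀ) + lam ^ 2 * (l0mat C : ℝ))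
    (C : ℕ → Matrix (Fin N) (Fin J) ℝ) (D : ℕ → Matrix (Fin n) (Fin J) ℝ)
    (Cstar : Matrix (Fin N) (Fin J) ℝ) (Dstar : Matrix (Fin n) (Fin J) ℝ)
    (hconv : Tendsto (fun t => (C t, D t)) atTop (nhds (Cstar, Dstar)))
    (hgap : ∀ t i j, C t i j = 0 ∨ lam ≤ |C t i j|) :
    Tendsto (fun t => f (C t) (D t)) atTop (nhds (f Cstar Dstar)) := by
  subst hf
  have hC : Tendsto C atTop (𝓝 Cstar) := hconv.fst_nhds
  have hsparsity : Tendsto (fun t => (l0mat (C t) : ℝ)) atTop (𝓝 (l0mat Cstar : ℝ)) :=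
    tendsto_const_nhds.congr' <| (hC.eventually_l0mat_eq_of_gap hlam hgap).mono
      fun t ht => congrArg Nat.cast ht.symm
  exact (tendsto_frobSq_sub_mul_transpose Y hconv).add (hsparsity.const_mul _)

theorem stmt11 {n N J : ℕ} (hn : 0 < n) (hN : 0 < N) (hJ : 0 < J)
    (Y : Matrix (Fin n) (Fin N) ℝ) (lam : ℝ) (hlam : 0 < lam)
    (f : Matrix (Fin N) (Fin J) ℝ → Matrix (Fin n) (Fin J) ℝ → ℝ)
    (hf : f = fun C D => frobSq (Y - D * Cᵀ) + lam ^ 2 * (l0mat C : ℝ))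
    (C : ℕ → Matrix (Fin N) (Fin J) ℝ) (D : ℕ → Matrix (Fin n) (Fin J) ℝ)
    (Cstar : Matrix (Fin N) (Fin J) ℝ) (Dstar : Matrix (Fin n) (Fin J) ℝ)
    (hconv : Tendsto (fun t => (C t, D t)) atTop (nhds (Cstar, Dstar)))
    (hgap : ∀ t i j, C t i j = 0 ∨ lam ≤ |C t i j|) :
    Tendsto (fun t => f (C t) (D t)) atTop (nhds (f Cstar Dstar)) :=
  stmt11_general Y lam hlam f hf C D Cstar Dstar hconv hgap
end

section
/- Let n, N be positive integers, let Y ∈ ℝ^{n×N}, let λ, L be reals with 0 < λ < L, and define g(c, d) = ‖Y − d cᵀ‖_F² + λ² ‖c‖₀ for c ∈ ℝ^N, d ∈ ℝ^n. Let (c^t, d^t)_{t≥0} be a sequence with ‖d^t‖₂ = 1 and ‖c^t‖_∞ ≤ L for all t, such that for every t ≥ 1: (a) c^t is a global minimizer of c ↦ g(c, d^{t−1}) over {c : ‖c‖_∞ ≤ L}; (b) every nonzero entry of c^t has absolute value at least λ; and (c) d^t is a global minimizer of d ↦ g(c^t, d) over {d : ‖d‖₂ = 1}. Then every accumulation point (c*,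 d*) of the sequence (c^t, d^t) satisfies: d* is a global minimizer of d ↦ g(c*, d) over {d : ‖d‖₂ = 1}, and c* is a global minimizer of c ↦ g(c, d*) over {c : ‖c‖_∞ ≤ L}. -/
open Filter Matrix

/-! Alternating minimization never increases `g`, so the energies `g (c t) (d t)` decrease to the
value `g c* d*` attained along the convergent subsequence, and so do the half-step energies
`g (c (t+1)) (d t)` squeezed between them.  The only discontinuity of `g` is the `ℓ₀` term; it is
harmless here because every entry of `c t` (`t ≥ 1`) is either `0` or at least `λ` in size, so along
a convergent subsequence the support of `c t` eventually equals that of `c*`.  Passing to the limit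
in the two optimality conditions then gives coordinatewise optimality of `(c*, d*)`. -/

open Topology

noncomputable def sparseRankOneObjective {n N : ℕ} (Y : Matrix (Fin n) (Fin N) ℝ) (lam : ℝ)
    (c : Fin N → ℝ) (d : Fin n → ℝ) : ℝ :=
  frobSq (Y - outer d c) + lam ^ 2 * (l0 c : ℝ)

theorem continuous_frobSq_sub_outer {n N : ℕ} (Y : Matrix (Fin n) (Fin N) ℝ) :
    Continuous fun p : (Fin N → ℝ) × (Fin n → ℝ) => frobSq (Y - outer p.2 p.1) := by
  simp only [frobSq, outer, Matrix.sub_apply, Matrix.of_apply]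
  fun_prop

theorem eventually_eq_zero_iff_of_tendsto {ι : Type*} {l : Filter ι} {u : ι → ℝ} {x lam : ℝ}
    (hlam : 0 < lam) (hu : Tendsto u l (𝓝 x)) (hgap : ∀ᶠ k in l, u k = 0 ∨ lam ≤ |u k|) :
    ∀ᶠ k in l, (u k = 0 ↔ x = 0) := by
  by_cases hx : x = 0
  · subst hx
    have hsmall : ∀ᶠ k in l, |u k| < lam :=
      hu.abs.eventually (gt_mem_nhds (by rwa [abs_zero]))
    filter_upwards [hgap, hsmall] with k hk hk'
    simpa [not_le.2 hk'] using hk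
  · filter_upwards [hu.eventually_ne hx] with k hk
    simp [hk, hx]

theorem eventually_l0_eq_of_tendsto {ι : Type*} {l : Filter ι} {N : ℕ} {u : ι → Fin N → ℝ}
    {x : Fin N → ℝ} {lam : ℝ} (hlam : 0 < lam) (hu : Tendsto u l (𝓝 x))
    (hgap : ∀ᶠ k in l, ∀ i, u k i = 0 ∨ lam ≤ |u k i|) :
    ∀ᶠ k in l, l0 (u k) = l0 x := by
  have hsupp : ∀ᶠ k in l, ∀ i, (u k i = 0 ↔ x i = 0) := eventually_all.2 fun i =>
    eventually_eq_zero_iff_of_tendsto hlam (tendsto_pi_nhds.1 hu i) (hgap.mono fun _ h => h i)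
  filter_upwards [hsupp] with k hk
  simp only [l0, ne_eq, hk]

theorem tendsto_sparseRankOneObjective {ι : Type*} {l : Filter ι} {n N : ℕ}
    (Y : Matrix (Fin n) (Fin N) ℝ) (lam : ℝ) {u : ι → Fin N → ℝ} {v : ι → Fin n → ℝ}
    {x : Fin N → ℝ} {y : Fin n → ℝ} (hu : Tendsto u l (𝓝 x)) (hv : Tendsto v l (𝓝 y))
    (hl0 : ∀ᶠ k in l, l0 (u k) = l0 x) :
    Tendsto (fun k => sparseRankOneObjective Y lam (u k) (v k)) l
      (𝓝 (sparseRankOneObjective Y lam x y)) := by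
  have hfrob := ((continuous_frobSq_sub_outer Y).tendsto (x, y)).comp (hu.prodMk_nhds hv)
  refine (hfrob.add tendsto_const_nhds).congr' ?_
  filter_upwards [hl0] with k hk
  simp [sparseRankOneObjective, hk]

theorem tendsto_half_step_of_alternating_descent {α β : Type*} {F : α → β → ℝ} {x : ℕ → α}
    {y : ℕ → β} (hy : ∀ t, F (x (t + 1)) (y (t + 1)) ≤ F (x (t + 1)) (y t))
    (hx : ∀ t, F (x (t + 1)) (y t) ≤ F (x t) (y t)) {φ : ℕ → ℕ} (hφ : Tendsto φ atTop atTop)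
    {ℓ : ℝ} (hsub : Tendsto (fun k => F (x (φ k)) (y (φ k))) atTop (𝓝 ℓ)) :
    Tendsto (fun t => F (x (t + 1)) (y t)) atTop (𝓝 ℓ) := by
  have hanti : Antitone fun t => F (x t) (y t) :=
    antitone_nat_of_succ_le fun t => (hy t).trans (hx t)
  have henergy : Tendsto (fun t => F (x t) (y t)) atTop (𝓝 ℓ) :=
    (tendsto_iff_tendsto_subseq_of_antitone hanti hφ).2 hsub
  exact tendsto_of_tendsto_of_tendsto_of_le_of_le (henergy.comp (tendsto_add_atTop_nat 1))
    henergy hy hx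

theorem stmt13_general {n N : ℕ}
    (Y : Matrix (Fin n) (Fin N) ℝ) (lam L : ℝ) (hlam : 0 < lam)
    (g : (Fin N → ℝ) → (Fin n → ℝ) → ℝ)
    (hg : g = fun c d => frobSq (Y - outer d c) + lam ^ 2 * (l0 c : ℝ))
    (c : ℕ → Fin N → ℝ) (d : ℕ → Fin n → ℝ)
    (hdunit : ∀ t, Real.sqrt (∑ i, (d t i) ^ 2) = 1)
    (hcL : ∀ t i, |c t i| ≤ L)
    (ha : ∀ t, ∀ c' : Fin N → ℝ, (∀ i, |c' i| ≤ L) →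
      g (c (t + 1)) (d t) ≤ g c' (d t))
    (hb : ∀ t i, c (t + 1) i = 0 ∨ lam ≤ |c (t + 1) i|)
    (hc : ∀ t, ∀ d' : Fin n → ℝ, Real.sqrt (∑ i, (d' i) ^ 2) = 1 →
      g (c (t + 1)) (d (t + 1)) ≤ g (c (t + 1)) d')
    (cstar : Fin N → ℝ) (dstar : Fin n → ℝ)
    (hacc : ∃ φ : ℕ → ℕ, StrictMono φ ∧
      Tendsto (fun k => (c (φ k), d (φ k))) atTop (nhds (cstar, dstar))) :
    (∀ d' : Fin n → ℝ, Real.sqrt (∑ i, (d' i) ^ 2) = 1 →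
      g cstar dstar ≤ g cstar d') ∧
    (∀ c' : Fin N → ℝ, (∀ i, |c' i| ≤ L) →
      g cstar dstar ≤ g c' dstar) := by
  obtain ⟨φ, hφ, hlim⟩ := hacc
  have hg' : g = sparseRankOneObjective Y lam := hg
  subst hg'
  have hφ_succ : ∀ᶠ k in atTop, ∃ t, φ k = t + 1 :=
    (hφ.tendsto_atTop.eventually_ne_atTop 0).mono fun _ hk => Nat.exists_eq_succ_of_ne_zero hk
  have hl0 : ∀ᶠ k in atTop, l0 (c (φ k)) = l0 cstar := by
    refine eventually_l0_eq_of_tendsto hlam hlim.fst_nhds (hφ_succ.mono ?_)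
    rintro k ⟨t, ht⟩
    rw [ht]
    exact hb t
  have hsub := tendsto_sparseRankOneObjective Y lam hlim.fst_nhds hlim.snd_nhds hl0
  refine ⟨fun d' hd' => ?_, fun c' hc' => ?_⟩
  · refine le_of_tendsto_of_tendsto hsub
      (tendsto_sparseRankOneObjective Y lam hlim.fst_nhds tendsto_const_nhds hl0) ?_
    filter_upwards [hφ_succ] with k ⟨t, ht⟩
    rw [ht]
    exact hc t d' hd'
  · have hhalf := tendsto_half_step_of_alternating_descent (fun t => hc t (d t) (hdunit t))
      (fun t => ha t (c t) (hcL t)) hφ.tendsto_atTop hsub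
    exact le_of_tendsto_of_tendsto' (hhalf.comp hφ.tendsto_atTop)
      (tendsto_sparseRankOneObjective Y lam tendsto_const_nhds hlim.snd_nhds
        (Eventually.of_forall fun _ => rfl))
      fun k => ha (φ k) c' hc'

theorem stmt13 {n N : ℕ} (hn : 0 < n) (hN : 0 < N)
    (Y : Matrix (Fin n) (Fin N) ℝ) (lam L : ℝ) (hlam : 0 < lam) (hL : lam < L)
    (g : (Fin N → ℝ) → (Fin n → ℝ) → ℝ)
    (hg : g = fun c d => frobSq (Y - outer d c) + lam ^ 2 * (l0 c : ℝ))
    (c : ℕ → Fin N → ℝ) (d : ℕ → Fin n → ℝ)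
    (hdunit : ∀ t, Real.sqrt (∑ i, (d t i) ^ 2) = 1)
    (hcL : ∀ t i, |c t i| ≤ L)
    (ha : ∀ t, ∀ c' : Fin N → ℝ, (∀ i, |c' i| ≤ L) →
      g (c (t + 1)) (d t) ≤ g c' (d t))
    (hb : ∀ t i, c (t + 1) i = 0 ∨ lam ≤ |c (t + 1) i|)
    (hc : ∀ t, ∀ d' : Fin n → ℝ, Real.sqrt (∑ i, (d' i) ^ 2) = 1 →
      g (c (t + 1)) (d (t + 1)) ≤ g (c (t + 1)) d')
    (cstar : Fin N → ℝ) (dstar : Fin n → ℝ)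
    (hacc : ∃ φ : ℕ → ℕ, StrictMono φ ∧
      Tendsto (fun k => (c (φ k), d (φ k))) atTop (nhds (cstar, dstar))) :
    (∀ d' : Fin n → ℝ, Real.sqrt (∑ i, (d' i) ^ 2) = 1 →
      g cstar dstar ≤ g cstar d') ∧
    (∀ c' : Fin N → ℝ, (∀ i, |c' i| ≤ L) →
      g cstar dstar ≤ g c' dstar) :=
  stmt13_general Y lam L hlam g hg c d hdunit hcL ha hb hc cstar dstar hacc
end
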